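/- arXiv:2208.02687 — 3 statements merged into one kernel-verified Lean document; each statement's English description precedes it below -/
import Mathlib

section
/- Let H be a complex Hilbert space and let s, t ∈ B(H) be selfadjoint. Suppose that for every ε > 0 there exist selfadjoint operators a, b ∈ B(H) such that ε·1 + s + a ≥ 0, ε·1 + t − a ≥ 0, ε·1 − s + b ≥ 0, and ε·1 − t − b ≥ 0. Then t = −s. -/
/-!
Adding the first two and the last two inequalities gives `-2ε ≤ s + t ≤ 2ε` in the operator
order for every `ε > 0`. In a C⋆-algebra, an element squeezed between `-r` and `r` has norm
`O(r)`, so `s + t = 0`.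
-/

open ContinuousLinearMap

theorem CStarAlgebra.eq_zero_of_forall_neg_algebraMap_le_of_le_algebraMap
    {A : Type*} [CStarAlgebra A] [PartialOrder A] [StarOrderedRing A] {a : A}
    (h : ∀ r : ℝ, 0 < r → -algebraMap ℝ A r ≤ a ∧ a ≤ algebraMap ℝ A r) : a = 0 := by
  -- `a + r` is squeezed between `0` and `2r`, and `a` is within `r` of it.
  have bound : ∀ r : ℝ, 0 < r → ‖a‖ ≤ 3 * r := fun r hr => by
    obtain ⟨hlo, hhi⟩ := h r hr
    have hshift : ‖a + algebraMap ℝ A r‖ ≤ 2 * r := by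
      refine (norm_le_iff_le_algebraMap _ (by positivity) (neg_le_iff_add_nonneg.mp hlo)).mpr ?_
      rw [two_mul, map_add]
      gcongr
    have hr' : ‖algebraMap ℝ A r‖ ≤ r :=
      (norm_le_iff_le_algebraMap _ hr.le (algebraMap_nonneg A hr.le)).mpr le_rfl
    calc ‖a‖ = ‖(a + algebraMap ℝ A r) - algebraMap ℝ A r‖ := by rw [add_sub_cancel_right]
      _ ≤ ‖a + algebraMap ℝ A r‖ + ‖algebraMap ℝ A r‖ := norm_sub_le _ _
      _ ≤ 3 * r := by linarith
  refine norm_le_zero_iff.mp (le_of_forall_pos_le_add fun ε hε => ?_)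
  linarith [bound (ε / 3) (by positivity)]

theorem stmt_1_general
    {H : Type*} [NormedAddCommGroup H] [InnerProductSpace ℂ H] [CompleteSpace H]
    (s t : H →L[ℂ] H)
    (h : ∀ ε : ℝ, 0 < ε → ∃ a b : H →L[ℂ] H, IsSelfAdjoint a ∧ IsSelfAdjoint b ∧
      (ε • (1 : H →L[ℂ] H) + s + a).IsPositive ∧
      (ε • (1 : H →L[ℂ] H) + t - a).IsPositive ∧
      (ε • (1 : H →L[ℂ] H) - s + b).IsPositive ∧
      (ε • (1 : H →L[ℂ] H) - t - b).IsPositive) :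
    t = -s := by
  refine (neg_eq_of_add_eq_zero_right
    (CStarAlgebra.eq_zero_of_forall_neg_algebraMap_le_of_le_algebraMap fun r hr => ?_)).symm
  obtain ⟨a, b, -, -, h₁, h₂, h₃, h₄⟩ := h (r / 2) (by positivity)
  have hr : algebraMap ℝ (H →L[ℂ] H) r = (r / 2) • 1 + (r / 2) • 1 := by
    rw [Algebra.algebraMap_eq_smul_one, ← add_smul, add_halves]
  constructor
  · rw [neg_le_iff_add_nonneg, nonneg_iff_isPositive, hr]
    convert h₁.add h₂ using 1
    abel
  · rw [le_def, hr]
    convert h₃.add h₄ using 1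
    abel

theorem stmt_1
    {H : Type*} [NormedAddCommGroup H] [InnerProductSpace ℂ H] [CompleteSpace H]
    (s t : H →L[ℂ] H) (hs : IsSelfAdjoint s) (ht : IsSelfAdjoint t)
    (h : ∀ ε : ℝ, 0 < ε → ∃ a b : H →L[ℂ] H, IsSelfAdjoint a ∧ IsSelfAdjoint b ∧
      (ε • (1 : H →L[ℂ] H) + s + a).IsPositive ∧
      (ε • (1 : H →L[ℂ] H) + t - a).IsPositive ∧
      (ε • (1 : H →L[ℂ] H) - s + b).IsPositive ∧
      (ε • (1 : H →L[ℂ] H) - t - b).IsPositive) :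
    t = -s :=
  stmt_1_general s t h
end

section
/- Let H be a complex Hilbert space, let A ⊆ B(H) be a unital C*-subalgebra, and let φ : B(H) → B(H) be a completely positive map. Then φ(a x b) = a φ(x) b for all a, b ∈ A and x ∈ B(H) if and only if φ(a) = a·φ(1) for every a ∈ A. -/
/-!
Complete positivity makes `∑ i j, ⟪ζ i, φ (star (y i) * y j) (ζ j)⟫` nonnegative for all
`y : Fin n → B(H)` and `ζ : Fin n → H`. For `c ∈ A` take `y = (c, 1, x)` and
`ζ = (λ • ξ, -λ • c ξ, η)`: since `φ a = a * φ 1` on `A`, the `|λ|²` terms cancel and the sum is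
`conj λ * p + λ * q + r` with `p = ⟪ξ, (φ (c⋆ x) - c⋆ φ x) η⟫` and
`q = ⟪η, (φ (x⋆ c) - φ (x⋆) c) ξ⟫`. Such a function of `λ` can only be nonnegative everywhere if
`p = q = 0`, so `φ` is both a left and a right `A`-module map.
-/

open Matrix ContinuousLinearMap

/-- A linear map on B(H) is completely positive if, at every matrix level, it maps
positive matrices (those of the form `Nᴴ * N`) to positive matrices. -/
def IsCompletelyPositiveMapCLM {H : Type*} [NormedAddCommGroup H]
    [InnerProductSpace ℂ H] [CompleteSpace H]
    (φ : (H →L[ℂ] H) →ₗ[ℂ] (H →L[ℂ] H)) : Prop :=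
  ∀ (n : ℕ) (M : Matrix (Fin n) (Fin n) (H →L[ℂ] H)),
    (∃ N : Matrix (Fin n) (Fin n) (H →L[ℂ] H), M = Nᴴ * N) →
    ∃ N' : Matrix (Fin n) (Fin n) (H →L[ℂ] H), M.map φ = N'ᴴ * N'

open ComplexConjugate ComplexOrder InnerProductSpace

lemma Complex.eq_zero_of_forall_nonneg_ofReal_mul_add {z w : ℂ}
    (h : ∀ t : ℝ, 0 ≤ (t : ℂ) * z + w) : z = 0 := by
  simp only [Complex.nonneg_iff, Complex.add_re, Complex.add_im, Complex.re_ofReal_mul,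
    Complex.im_ofReal_mul] at h
  have him : z.im = 0 := by linarith [(h 0).2, (h 1).2]
  have hre : z.re = 0 := by
    by_contra hz
    have := (h ((-w.re - 1) / z.re)).1
    rw [div_mul_cancel₀ _ hz] at this
    linarith
  exact Complex.ext hre him

lemma Complex.eq_zero_of_forall_nonneg_conj_mul_add_mul_add {c d e : ℂ}
    (h : ∀ l : ℂ, 0 ≤ conj l * c + l * d + e) : c = 0 ∧ d = 0 := by
  have hlin : ∀ l : ℂ, conj l * c + l * d = 0 := fun l =>
    Complex.eq_zero_of_forall_nonneg_ofReal_mul_add (w := e) fun t => by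
      convert h (t * l) using 1
      simp only [map_mul, Complex.conj_ofReal]
      ring
  have h1 := hlin 1
  have hI := hlin Complex.I
  simp only [map_one, one_mul, Complex.conj_I] at h1 hI
  have hcd : c = d := by
    have : Complex.I * (d - c) = 0 := by linear_combination hI
    simpa [sub_eq_zero, eq_comm] using this
  subst hcd
  constructor <;> linear_combination h1 / 2

section

variable {H : Type*} [NormedAddCommGroup H] [InnerProductSpace ℂ H] [CompleteSpace H]

lemma Matrix.sum_inner_conjTranspose_mul_self_apply_nonneg {m n : Type*} [Fintype m]
    [Fintype n] (N : Matrix m n (H →L[ℂ] H)) (ζ : n → H) :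
    0 ≤ ∑ i, ∑ j, ⟪ζ i, (Nᴴ * N) i j (ζ j)⟫_ℂ := by
  have : ∑ i, ∑ j, ⟪ζ i, (Nᴴ * N) i j (ζ j)⟫_ℂ
      = ∑ k, ⟪∑ i, N k i (ζ i), ∑ j, N k j (ζ j)⟫_ℂ := by
    simp only [Matrix.mul_apply, Matrix.conjTranspose_apply, _root_.sum_apply,
      mul_apply_eq_comp, inner_sum, sum_inner, star_eq_adjoint, adjoint_inner_right]
    exact Finset.sum_comm.trans
      ((Finset.sum_congr rfl fun _ _ => Finset.sum_comm).trans Finset.sum_comm)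
  rw [this]
  refine Finset.sum_nonneg fun k _ => ?_
  exact RCLike.nonneg_iff.mpr ⟨inner_self_nonneg, inner_self_im _⟩

namespace IsCompletelyPositiveMapCLM

variable {φ : (H →L[ℂ] H) →ₗ[ℂ] (H →L[ℂ] H)} (hcp : IsCompletelyPositiveMapCLM φ)
include hcp

lemma sum_inner_map_star_mul_nonneg {n : ℕ} (y : Fin n → H →L[ℂ] H) (ζ : Fin n → H) :
    0 ≤ ∑ i, ∑ j, ⟪ζ i, φ (star (y i) * y j) (ζ j)⟫_ℂ := by
  cases n with
  | zero => simp
  | succ n =>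
    let N : Matrix (Fin (n + 1)) (Fin (n + 1)) (H →L[ℂ] H) :=
      Matrix.of fun k j => if k = 0 then y j else 0
    obtain ⟨N', hN'⟩ := hcp _ (Nᴴ * N) ⟨N, rfl⟩
    have hφ : ∀ i j, φ (star (y i) * y j) = (N'ᴴ * N') i j := fun i j => by
      rw [← hN']
      simp [N, Matrix.mul_apply]
    simp only [hφ]
    exact N'.sum_inner_conjTranspose_mul_self_apply_nonneg ζ

lemma inner_map_star_mul_sub_eq_zero (A : StarSubalgebra ℂ (H →L[ℂ] H))
    (h : ∀ a ∈ A, φ a = a * φ 1) {c : H →L[ℂ] H} (hc : c ∈ A) (x : H →L[ℂ] H) (ξ η : H) :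
    ⟪ξ, (φ (star c * x) - star c * φ x) η⟫_ℂ = 0 ∧
      ⟪η, (φ (star x * c) - φ (star x) * c) ξ⟫_ℂ = 0 := by
  have hc' : star c ∈ A := star_mem hc
  refine Complex.eq_zero_of_forall_nonneg_conj_mul_add_mul_add
    (e := ⟪η, φ (star x * x) η⟫_ℂ) fun l => ?_
  convert hcp.sum_inner_map_star_mul_nonneg ![c, 1, x] ![l • ξ, -(l • c ξ), η] using 1
  simp only [Fin.sum_univ_three, Matrix.cons_val_zero, Matrix.cons_val_one, Matrix.cons_val_two,
    Matrix.head_cons, Matrix.tail_cons, star_one, mul_one, one_mul, h c hc, h _ hc',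
    h _ (mul_mem hc' hc)]
  simp only [_root_.sub_apply, mul_apply_eq_comp, map_neg, map_smul, inner_sub_right,
    inner_neg_left, inner_neg_right, inner_smul_left, inner_smul_right, ← adjoint_inner_right,
    star_eq_adjoint]
  ring

lemma map_mul_left_of_mem (A : StarSubalgebra ℂ (H →L[ℂ] H)) (h : ∀ a ∈ A, φ a = a * φ 1)
    {a : H →L[ℂ] H} (ha : a ∈ A) (x : H →L[ℂ] H) : φ (a * x) = a * φ x := by
  rw [← sub_eq_zero]
  ext η
  refine ext_inner_left ℂ fun ξ => ?_
  simpa [inner_sub_right] using (hcp.inner_map_star_mul_sub_eq_zero A h (star_mem ha) x ξ η).1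

lemma map_mul_right_of_mem (A : StarSubalgebra ℂ (H →L[ℂ] H)) (h : ∀ a ∈ A, φ a = a * φ 1)
    {b : H →L[ℂ] H} (hb : b ∈ A) (x : H →L[ℂ] H) : φ (x * b) = φ x * b := by
  rw [← sub_eq_zero]
  ext η
  refine ext_inner_left ℂ fun ξ => ?_
  simpa [inner_sub_right] using (hcp.inner_map_star_mul_sub_eq_zero A h hb (star x) η ξ).2

end IsCompletelyPositiveMapCLM

end

theorem stmt_7_general
    {H : Type*} [NormedAddCommGroup H] [InnerProductSpace ℂ H] [CompleteSpace H]
    (A : StarSubalgebra ℂ (H →L[ℂ] H))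
    (φ : (H →L[ℂ] H) →ₗ[ℂ] (H →L[ℂ] H)) (hcp : IsCompletelyPositiveMapCLM φ) :
    (∀ a ∈ A, ∀ b ∈ A, ∀ x : H →L[ℂ] H, φ (a * x * b) = a * φ x * b) ↔
      (∀ a ∈ A, φ a = a * φ 1) := by
  refine ⟨fun h a ha => by simpa using h a ha 1 (one_mem A) 1, fun h a ha b hb x => ?_⟩
  rw [hcp.map_mul_right_of_mem A h hb, hcp.map_mul_left_of_mem A h ha]

theorem stmt_7
    {H : Type*} [NormedAddCommGroup H] [InnerProductSpace ℂ H] [CompleteSpace H]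
    (A : StarSubalgebra ℂ (H →L[ℂ] H)) (hA : IsClosed (A : Set (H →L[ℂ] H)))
    (φ : (H →L[ℂ] H) →ₗ[ℂ] (H →L[ℂ] H)) (hcp : IsCompletelyPositiveMapCLM φ) :
    (∀ a ∈ A, ∀ b ∈ A, ∀ x : H →L[ℂ] H, φ (a * x * b) = a * φ x * b) ↔
      (∀ a ∈ A, φ a = a * φ 1) :=
  stmt_7_general A φ hcp
end

section
/- Let H be a complex Hilbert space, let A ⊆ B(H) be a subalgebra closed in the weak operator topology, and let s, t ∈ B(H) be selfadjoint. For n ≥ 1 set Xₙ = { a ∈ A : a = a*, (1/n)·1 + s + a ≥ 0 and (1/n)·1 + t − a ≥ 0 }. If every Xₙ is nonempty, then there exists a selfadjoint a₀ ∈ A with s + a₀ ≥ 0 and t − a₀ ≥ 0. -/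
/-!
The constraints `-(1/n + s) ≤ aₙ ≤ 1/n + t` bound the `aₙ` uniformly in norm, and closed balls of
`B(H)` are compact in the weak operator topology: the matrix coefficients `⟪T x, y⟫` identify such
a ball with the bounded sesquilinear forms (Riesz representation), a closed subset of a product of
discs. A WOT cluster point `a₀` of `(aₙ)` lies in the WOT-closed algebra `A`, and since Loewner
intervals are WOT-closed, `-(1/n + s) ≤ a₀ ≤ 1/n + t` for every `n`, hence `-s ≤ a₀ ≤ t`.
-/

open ContinuousLinearMap Filter Topology ComplexConjugate
open scoped InnerProductSpace

namespace ContinuousLinearMapWOT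

variable {𝕜 E F : Type*} [RCLike 𝕜]

section
variable [AddCommGroup E] [TopologicalSpace E] [Module 𝕜 E]
  [NormedAddCommGroup F] [InnerProductSpace 𝕜 F] [CompleteSpace F]

@[fun_prop]
lemma continuous_inner_apply_left (x : E) (y : F) :
    Continuous fun T : E →WOT[𝕜] F => ⟪T x, y⟫_𝕜 := by
  simpa only [Function.comp_def, id, inner_conj_symm] using
    RCLike.continuous_conj.comp (continuous_inner_apply (continuous_id (X := E →WOT[𝕜] F)) x y)

lemma isInducing_inner_apply :
    IsInducing fun (T : E →WOT[𝕜] F) (p : E × F) => ⟪T p.1, p.2⟫_𝕜 := by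
  refine .of_comp (g := fun B (p : E × StrongDual 𝕜 F) =>
      conj (B (p.1, (InnerProductSpace.toDual 𝕜 F).symm p.2)))
    (continuous_pi fun p => by fun_prop)
    (continuous_pi fun p => RCLike.continuous_conj.comp (continuous_apply _)) ?_
  convert isInducing_inducingFn (σ := RingHom.id 𝕜) (E := E) (F := F) using 1
  ext T ⟨x, y⟩
  simp [InnerProductSpace.toDual_symm_apply]

end

section
variable [NormedAddCommGroup E] [NormedSpace 𝕜 E]

variable (𝕜 E) in
def boundedSesqForms (r : ℝ) : Set (E × E → 𝕜) :=
  {B | (∀ x x' y, B (x + x', y) = B (x, y) + B (x', y)) ∧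
    (∀ (c : 𝕜) x y, B (c • x, y) = conj c * B (x, y)) ∧
    (∀ x y y', B (x, y + y') = B (x, y) + B (x, y')) ∧
    (∀ (c : 𝕜) x y, B (x, c • y) = c * B (x, y)) ∧
    ∀ x y, ‖B (x, y)‖ ≤ r * ‖x‖ * ‖y‖}

lemma isClosed_boundedSesqForms (r : ℝ) : IsClosed (boundedSesqForms 𝕜 E r) := by
  simp only [boundedSesqForms, Set.ofPred_and, Set.ofPred_forall]
  refine .inter ?_ (.inter ?_ (.inter ?_ (.inter ?_ ?_))) <;>
    refine isClosed_iInter fun _ => isClosed_iInter fun _ => ?_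
  all_goals first
    | exact isClosed_iInter fun _ => isClosed_eq (by fun_prop) (by fun_prop)
    | exact isClosed_le (by fun_prop) (by fun_prop)

end

section
variable [NormedAddCommGroup E] [InnerProductSpace 𝕜 E] [CompleteSpace E]

lemma isClosed_setOf_isPositive : IsClosed {T : E →WOT[𝕜] E | (toCLM T).IsPositive} := by
  simp only [isPositive_def, ← isSelfAdjoint_iff_isSymmetric, reApplyInnerSelf_apply,
    Set.ofPred_and, Set.ofPred_forall]
  have hre (x : E) : Continuous fun T : E →WOT[𝕜] E => RCLike.re ⟪toCLM T x, x⟫_𝕜 :=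
    RCLike.continuous_re.comp (continuous_inner_apply_left x x)
  refine .inter ?_ (isClosed_iInter fun x => isClosed_le continuous_const (hre x))
  have hsa : {T : E →WOT[𝕜] E | IsSelfAdjoint (toCLM T)} = {T | star T = T} := by
    ext T
    simp [IsSelfAdjoint, ContinuousLinearMapWOT.ext_iff, ContinuousLinearMap.ext_iff, star_apply]
  rw [hsa]
  exact isClosed_eq continuous_star continuous_id

lemma isClosed_setOf_nonneg_add (c : E →L[𝕜] E) :
    IsClosed {T : E →WOT[𝕜] E | 0 ≤ c + toCLM T} := by
  simp only [nonneg_iff_isPositive]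
  exact isClosed_setOf_isPositive.preimage (continuous_const_add (ofCLM c))

lemma isClosed_setOf_nonneg_sub (c : E →L[𝕜] E) :
    IsClosed {T : E →WOT[𝕜] E | 0 ≤ c - toCLM T} := by
  simp only [nonneg_iff_isPositive]
  exact isClosed_setOf_isPositive.preimage (continuous_sub_left (ofCLM c))

lemma exists_inner_eq_of_mem_boundedSesqForms {r : ℝ} (hr : 0 ≤ r) {B : E × E → 𝕜}
    (hB : B ∈ boundedSesqForms 𝕜 E r) :
    ∃ T : E →L[𝕜] E, ‖T‖ ≤ r ∧ ∀ x y, ⟪T x, y⟫_𝕜 = B (x, y) := by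
  obtain ⟨add_left, smul_left, add_right, smul_right, bound⟩ := hB
  let b : E →L⋆[𝕜] E →L[𝕜] 𝕜 :=
    (LinearMap.mk₂'ₛₗ (starRingEnd 𝕜) (RingHom.id 𝕜) (fun x y => B (x, y))
      add_left smul_left add_right smul_right).mkContinuous₂ r bound
  refine ⟨InnerProductSpace.continuousLinearMapOfBilin b, ?_,
    InnerProductSpace.continuousLinearMapOfBilin_apply b⟩
  refine opNorm_le_bound _ hr fun x => ?_
  calc ‖InnerProductSpace.continuousLinearMapOfBilin b x‖ = ‖b x‖ := by
        simp [InnerProductSpace.continuousLinearMapOfBilin]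
    _ ≤ r * ‖x‖ := (le_opNorm _ _).trans (mul_le_mul_of_nonneg_right
        (LinearMap.mkContinuous₂_norm_le _ hr bound) (norm_nonneg x))

lemma image_inner_apply_closedBall {r : ℝ} (hr : 0 ≤ r) :
    (fun (T : E →WOT[𝕜] E) (p : E × E) => ⟪T p.1, p.2⟫_𝕜) '' (ofCLM '' Metric.closedBall 0 r) =
      boundedSesqForms 𝕜 E r := by
  refine subset_antisymm ?_ fun B hB => ?_
  · rintro _ ⟨_, ⟨T, hT, rfl⟩, rfl⟩
    refine ⟨fun x x' y => ?_, fun c x y => ?_, fun x y y' => ?_, fun c x y => ?_, fun x y => ?_⟩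
    · simp [inner_add_left]
    · simp [inner_smul_left]
    · simp [inner_add_right]
    · simp [inner_smul_right]
    · calc ‖⟪T x, y⟫_𝕜‖ ≤ ‖T‖ * ‖x‖ * ‖y‖ := norm_inner_le_norm _ _ |>.trans
            (mul_le_mul_of_nonneg_right (le_opNorm _ _) (norm_nonneg y))
        _ ≤ r * ‖x‖ * ‖y‖ := by
            gcongr
            simpa using hT
  · obtain ⟨T, hT, hTB⟩ := exists_inner_eq_of_mem_boundedSesqForms hr hB
    exact ⟨ofCLM T, ⟨T, mem_closedBall_zero_iff.2 hT, rfl⟩, funext fun p => hTB p.1 p.2⟩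

lemma isCompact_image_closedBall (r : ℝ) :
    IsCompact (ofCLM '' Metric.closedBall (0 : E →L[𝕜] E) r) := by
  obtain hr | hr := lt_or_ge r 0
  · simp [Metric.closedBall_eq_empty.2 hr]
  rw [isInducing_inner_apply.isCompact_iff, image_inner_apply_closedBall hr]
  refine (isCompact_univ_pi fun p : E × E => isCompact_closedBall (0 : 𝕜) (r * ‖p.1‖ * ‖p.2‖))
    |>.of_isClosed_subset (isClosed_boundedSesqForms r) fun B hB p _ => ?_
  simpa using hB.2.2.2.2 p.1 p.2

end
end ContinuousLinearMapWOT

open ContinuousLinearMapWOT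

section
variable {A : Type*} [CStarAlgebra A] [PartialOrder A] [StarOrderedRing A]

lemma norm_le_of_nonneg_add_of_nonneg_sub {p q a : A} (hp : 0 ≤ p + a) (hq : 0 ≤ q - a) :
    ‖a‖ ≤ 2 * ‖p‖ + ‖q‖ := by
  have hpa : ‖p + a‖ ≤ ‖p + q‖ :=
    CStarAlgebra.norm_le_norm_of_nonneg_of_le hp (add_le_add_right (sub_nonneg.1 hq) p)
  calc ‖a‖ = ‖(p + a) - p‖ := by rw [add_sub_cancel_left]
    _ ≤ ‖p + a‖ + ‖p‖ := norm_sub_le _ _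
    _ ≤ ‖p‖ + ‖q‖ + ‖p‖ := by gcongr; exact hpa.trans (norm_add_le _ _)
    _ = 2 * ‖p‖ + ‖q‖ := by ring

end

lemma nonneg_of_forall_one_div_smul_add_nonneg {A : Type*} [AddCommGroup A] [Module ℝ A]
    [TopologicalSpace A] [ContinuousAdd A] [ContinuousSMul ℝ A] [Preorder A] [ClosedIciTopology A]
    {e x : A} (h : ∀ n : ℕ, 1 ≤ n → 0 ≤ (1 / (n : ℝ)) • e + x) : 0 ≤ x := by
  have hlim : Tendsto (fun n : ℕ => (1 / (n : ℝ)) • e + x) atTop (𝓝 x) := by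
    simpa using ((tendsto_one_div_atTop_nhds_zero_nat (𝕜 := ℝ)).smul_const e).add_const x
  exact ge_of_tendsto hlim (eventually_atTop.2 ⟨1, h⟩)

theorem stmt_8_general
    {H : Type*} [NormedAddCommGroup H] [InnerProductSpace ℂ H] [CompleteSpace H]
    (A : Subalgebra ℂ (H →L[ℂ] H))
    (hA : IsClosed ((ContinuousLinearMapWOT.linearEquiv (E := H) (F := H) (σ := RingHom.id ℂ) ℂ).symm '' (A : Set (H →L[ℂ] H))))
    (s t : H →L[ℂ] H) (hs : IsSelfAdjoint s)
    (hX : ∀ n : ℕ, 1 ≤ n → ∃ a ∈ A, IsSelfAdjoint a ∧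
      ((1 / (n : ℝ)) • (1 : H →L[ℂ] H) + s + a).IsPositive ∧
      ((1 / (n : ℝ)) • (1 : H →L[ℂ] H) + t - a).IsPositive) :
    ∃ a₀ ∈ A, IsSelfAdjoint a₀ ∧ (s + a₀).IsPositive ∧ (t - a₀).IsPositive := by
  simp only [← nonneg_iff_isPositive] at hX ⊢
  choose! a haA _ has hat using hX
  have hmono : ∀ n m : ℕ, 1 ≤ n → n ≤ m → 0 ≤ (1 / (n : ℝ)) • (1 : H →L[ℂ] H) + s + a m ∧
      0 ≤ (1 / (n : ℝ)) • (1 : H →L[ℂ] H) + t - a m := by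
    intro n m hn hnm
    have hε : (1 / (m : ℝ)) • (1 : H →L[ℂ] H) ≤ (1 / (n : ℝ)) • 1 := by gcongr
    exact ⟨(has m (hn.trans hnm)).trans (by gcongr), (hat m (hn.trans hnm)).trans (by gcongr)⟩
  obtain ⟨_, ⟨a₀, -, rfl⟩, hclu⟩ :=
    (isCompact_image_closedBall (2 * ‖1 + s‖ + ‖1 + t‖)).exists_clusterPt
      (f := map (ofCLM ∘ a) atTop) <| by
        rw [le_principal_iff, mem_map]
        filter_upwards [eventually_ge_atTop 1] with n hn
        refine ⟨a n, mem_closedBall_zero_iff.2 ?_, rfl⟩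
        obtain ⟨hsn, htn⟩ := hmono 1 n le_rfl hn
        simpa using norm_le_of_nonneg_add_of_nonneg_sub hsn htn
  have ha₀A : a₀ ∈ A := by
    obtain ⟨b, hb, hba⟩ := hA.mem_of_mapClusterPt hclu
      ((eventually_ge_atTop 1).mono fun n hn => ⟨a n, haA n hn, rfl⟩)
    rwa [ofCLM_injective hba] at hb
  have hlim : ∀ n : ℕ, 1 ≤ n → 0 ≤ (1 / (n : ℝ)) • (1 : H →L[ℂ] H) + (s + a₀) ∧
      0 ≤ (1 / (n : ℝ)) • (1 : H →L[ℂ] H) + (t - a₀) := fun n hn => by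
    simpa only [add_assoc, add_sub_assoc, Set.mem_inter_iff, Set.mem_ofPred_eq, toCLM_ofCLM] using
      ((isClosed_setOf_nonneg_add _).inter (isClosed_setOf_nonneg_sub _)).mem_of_mapClusterPt hclu
        ((eventually_ge_atTop n).mono fun m hm => hmono n m hn hm)
  have hs₀ := nonneg_of_forall_one_div_smul_add_nonneg fun n hn => (hlim n hn).1
  have ht₀ := nonneg_of_forall_one_div_smul_add_nonneg fun n hn => (hlim n hn).2
  exact ⟨a₀, ha₀A, by simpa using (IsSelfAdjoint.of_nonneg hs₀).sub hs, hs₀, ht₀⟩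

theorem stmt_8
    {H : Type*} [NormedAddCommGroup H] [InnerProductSpace ℂ H] [CompleteSpace H]
    (A : Subalgebra ℂ (H →L[ℂ] H))
    (hA : IsClosed ((ContinuousLinearMapWOT.linearEquiv (E := H) (F := H) (σ := RingHom.id ℂ) ℂ).symm '' (A : Set (H →L[ℂ] H))))
    (s t : H →L[ℂ] H) (hs : IsSelfAdjoint s) (ht : IsSelfAdjoint t)
    (hX : ∀ n : ℕ, 1 ≤ n → ∃ a ∈ A, IsSelfAdjoint a ∧
      ((1 / (n : ℝ)) • (1 : H →L[ℂ] H) + s + a).IsPositive ∧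
      ((1 / (n : ℝ)) • (1 : H →L[ℂ] H) + t - a).IsPositive) :
    ∃ a₀ ∈ A, IsSelfAdjoint a₀ ∧ (s + a₀).IsPositive ∧ (t - a₀).IsPositive :=
  stmt_8_general A hA s t hs hX
end
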